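/- arXiv:math/0308043 — 2 statements merged into one kernel-verified Lean document; each statement's English description precedes it below -/
import Mathlib

section
/- Let f : ℝⁿ → ℂ be continuous with compact support, and for t > 0 let f_t(z) = c_n t^{−n/2} ∫_{ℝⁿ} f(y) exp(−(z−y)·(z−y)/t) dy for z ∈ ℂⁿ, where (z−y)·(z−y) = Σ (z_j − y_j)² and c_n normalizes the heat kernel. Then f_t is an entire function on ℂⁿ, and for every 0 < C < 1 and N > 0, sup over {z ∈ ℂⁿ : |Im z| ≤ C |Re z|} of |f_t(z)| e^{N|z|} is finite. -/
/-!
Holomorphy: differentiate under the integral sign. The integrand is `f y • G (z - y)` with `G`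
entire, so its `z`-derivative is jointly continuous and, `f` having compact support, bounded on
`ball z₀ 1 × supp f`.

Decay: for `|y| ≤ R` one has `|exp (-(z - y)·(z - y)/t)| = exp ((|Im z|² - |Re z - y|²)/t)`
and `|Re z - y|² ≥ |Re z|² - 2R|Re z|`. In the cone `|Im z|² ≤ C²|Re z|²` and `|z| ≤ 2|Re z|`, so
the exponent of `|f_t(z)| e^{N|z|}` is at most the downward parabola
`-((1 - C²)/t) X² + (2R/t + 2N) X` in `X = |Re z|`, which is bounded above.
-/

open MeasureTheory Function

section ParametricIntegral

variable {𝕜 E F X : Type*} [RCLike 𝕜] [NormedAddCommGroup E] [NormedSpace 𝕜 E]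
  [NormedAddCommGroup F] [NormedSpace ℝ F] [NormedSpace 𝕜 F]
  [TopologicalSpace X] [T2Space X] [MeasurableSpace X] [OpensMeasurableSpace X]
  {μ : Measure X} [IsFiniteMeasureOnCompacts μ]

theorem differentiable_integral_of_continuous_fderiv [ProperSpace E]
    {g : E → X → F} {g' : E → X → E →L[𝕜] F} {K : Set X} (hK : IsCompact K)
    (hg : ∀ z, Continuous (g z)) (hg' : Continuous (uncurry g'))
    (hderiv : ∀ z x, HasFDerivAt (g · x) (g' z x) z) (hsupp : ∀ z, ∀ x ∉ K, g z x = 0) :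
    Differentiable 𝕜 fun z => ∫ x, g z x ∂μ := by
  intro z₀
  obtain ⟨M, hM⟩ := ((isCompact_closedBall z₀ 1).prod hK).exists_bound_of_continuousOn
    hg'.continuousOn
  have hg'_supp : ∀ z, ∀ x ∉ K, g' z x = 0 := fun z x hx =>
    (hderiv z x).unique (by simpa [hsupp _ x hx] using hasFDerivAt_const (0 : F) z)
  have hg_int : ∀ z, Integrable (g z) μ := fun z =>
    (hg z).integrable_of_hasCompactSupport (HasCompactSupport.intro hK (hsupp z))
  have hbound : ∀ x, ∀ z ∈ Metric.ball z₀ 1, ‖g' z x‖ ≤ K.indicator (fun _ => M) x := by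
    intro x z hz
    by_cases hx : x ∈ K
    · rw [Set.indicator_of_mem hx]
      exact hM (z, x) ⟨Metric.ball_subset_closedBall hz, hx⟩
    · simp [Set.indicator_of_notMem hx, hg'_supp z x hx]
  exact (hasFDerivAt_integral_of_dominated_of_fderiv_le (Metric.ball_mem_nhds z₀ one_pos)
    (.of_forall fun z => (hg_int z).aestronglyMeasurable) (hg_int z₀)
    ((hg'.comp (Continuous.prodMk_right z₀)).integrable_of_hasCompactSupport
      (HasCompactSupport.intro hK (hg'_supp z₀))).aestronglyMeasurable
    (.of_forall hbound)
    ((integrableOn_const hK.measure_lt_top.ne).integrable_indicator hK.measurableSet)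
    (.of_forall fun x z _ => hderiv z x)).differentiableAt

theorem differentiable_integral_smul_comp_sub [ProperSpace E] {f : X → 𝕜} (hf : Continuous f)
    (hsupp : HasCompactSupport f) {φ : X → E} (hφ : Continuous φ) {G : E → F}
    (hG : ContDiff 𝕜 1 G) :
    Differentiable 𝕜 fun z => ∫ x, f x • G (z - φ x) ∂μ := by
  refine differentiable_integral_of_continuous_fderiv
    (g' := fun z x => f x • fderiv 𝕜 G (z - φ x)) hsupp
    (fun z => hf.smul (hG.continuous.comp (continuous_const.sub hφ)))
    ((hf.comp continuous_snd).smul ((hG.continuous_fderiv one_ne_zero).comp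
      (continuous_fst.sub (hφ.comp continuous_snd))))
    (fun z x => ?_) (fun z x hx => by simp [image_eq_zero_of_notMem_tsupport hx])
  exact (((hG.differentiable one_ne_zero).differentiableAt.hasFDerivAt).comp z
    ((hasFDerivAt_id z).sub_const (φ x))).const_smul (f x)

end ParametricIntegral

section Estimates

variable {ι : Type*} [Fintype ι]

theorem norm_cexp_neg_sum_sq_div (w : ι → ℂ) (t : ℝ) :
    ‖Complex.exp (-(∑ j, w j ^ 2) / t)‖ =
      Real.exp ((∑ j, (w j).im ^ 2 - ∑ j, (w j).re ^ 2) / t) := by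
  rw [Complex.norm_exp, Complex.div_ofReal_re, Complex.neg_re, Complex.re_sum,
    ← Finset.sum_sub_distrib, ← Finset.sum_neg_distrib]
  simp [sq, Complex.mul_re]

theorem sq_sub_two_mul_le_sum_sub_sq (x y : ι → ℝ) {R : ℝ} (hy : √(∑ j, y j ^ 2) ≤ R) :
    √(∑ j, x j ^ 2) ^ 2 - 2 * R * √(∑ j, x j ^ 2) ≤ ∑ j, (x j - y j) ^ 2 := by
  have hCS := Real.sum_mul_le_sqrt_mul_sqrt Finset.univ x y
  have hexpand :
      ∑ j, (x j - y j) ^ 2 = ∑ j, x j ^ 2 - 2 * ∑ j, x j * y j + ∑ j, y j ^ 2 := by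
    simp only [sub_sq, Finset.sum_add_distrib, Finset.sum_sub_distrib, Finset.mul_sum, mul_assoc]
  rw [hexpand, Real.sq_sqrt (by positivity)]
  have : √(∑ j, x j ^ 2) * √(∑ j, y j ^ 2) ≤ √(∑ j, x j ^ 2) * R := by gcongr
  nlinarith [Finset.sum_nonneg fun j (_ : j ∈ Finset.univ) => sq_nonneg (y j)]

theorem sum_im_sq_le_of_sqrt_le {z : ι → ℂ} {C : ℝ}
    (hz : √(∑ j, (z j).im ^ 2) ≤ C * √(∑ j, (z j).re ^ 2)) :
    ∑ j, (z j).im ^ 2 ≤ C ^ 2 * ∑ j, (z j).re ^ 2 := by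
  have := pow_le_pow_left₀ (Real.sqrt_nonneg _) hz 2
  rwa [mul_pow, Real.sq_sqrt (by positivity), Real.sq_sqrt (by positivity)] at this

theorem sqrt_sum_norm_sq_le_two_mul {z : ι → ℂ}
    (hz : ∑ j, (z j).im ^ 2 ≤ ∑ j, (z j).re ^ 2) :
    √(∑ j, ‖z j‖ ^ 2) ≤ 2 * √(∑ j, (z j).re ^ 2) := by
  have hsplit : ∑ j, ‖z j‖ ^ 2 = ∑ j, (z j).re ^ 2 + ∑ j, (z j).im ^ 2 := by
    simp only [Complex.sq_norm, Complex.normSq_apply, ← sq, Finset.sum_add_distrib]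
  rw [hsplit, Real.sqrt_le_iff, mul_pow, Real.sq_sqrt (by positivity)]
  have : 0 ≤ ∑ j, (z j).re ^ 2 := by positivity
  exact ⟨by positivity, by linarith⟩

theorem neg_mul_sq_add_mul_le {a : ℝ} (ha : 0 < a) (b x : ℝ) :
    -(a * x ^ 2) + b * x ≤ b ^ 2 / (4 * a) := by
  rw [le_div_iff₀ (by positivity)]
  nlinarith [sq_nonneg (2 * a * x - b)]

theorem norm_cexp_mul_exp_le_of_cone {t C N R : ℝ} (ht : 0 < t) (hC : C ^ 2 < 1) (hN : 0 ≤ N)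
    {z : ι → ℂ} (hz : ∑ j, (z j).im ^ 2 ≤ C ^ 2 * ∑ j, (z j).re ^ 2)
    {y : ι → ℝ} (hy : √(∑ j, y j ^ 2) ≤ R) :
    ‖Complex.exp (-(∑ j, (z j - y j) ^ 2) / t)‖ * Real.exp (N * √(∑ j, ‖z j‖ ^ 2)) ≤
      Real.exp ((2 * R / t + 2 * N) ^ 2 / (4 * ((1 - C ^ 2) / t))) := by
  have hre := sq_sub_two_mul_le_sum_sub_sq (fun j => (z j).re) y hy
  set X := √(∑ j, (z j).re ^ 2)
  have hX : X ^ 2 = ∑ j, (z j).re ^ 2 := Real.sq_sqrt (by positivity)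
  have hnorm : N * √(∑ j, ‖z j‖ ^ 2) ≤ N * (2 * X) := by
    have : 0 ≤ ∑ j, (z j).re ^ 2 := by positivity
    gcongr
    exact sqrt_sum_norm_sq_le_two_mul (hz.trans (by nlinarith))
  rw [norm_cexp_neg_sum_sq_div, ← Real.exp_add, Real.exp_le_exp]
  simp only [Complex.sub_re, Complex.sub_im, Complex.ofReal_re, Complex.ofReal_im, sub_zero]
  calc _ ≤ (C ^ 2 * X ^ 2 - (X ^ 2 - 2 * R * X)) / t + N * (2 * X) := by
        gcongr; rwa [hX]
    _ = -((1 - C ^ 2) / t * X ^ 2) + (2 * R / t + 2 * N) * X := by field_simp; ring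
    _ ≤ _ := neg_mul_sq_add_mul_le (div_pos (by linarith) ht) _ _

end Estimates

theorem norm_integral_mul_mul_le {X 𝕜 : Type*} [MeasurableSpace X] {μ : Measure X} [RCLike 𝕜]
    {f k : X → 𝕜} (hf : Integrable f μ) {e M : ℝ} (he : 0 < e)
    (hk : ∀ x, f x ≠ 0 → ‖k x‖ * e ≤ M) :
    ‖∫ x, f x * k x ∂μ‖ * e ≤ (∫ x, ‖f x‖ ∂μ) * M := by
  have hpt : ∀ x, ‖f x * k x‖ ≤ ‖f x‖ * (M / e) := fun x => by
    rcases eq_or_ne (f x) 0 with hfx | hfx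
    · simp [hfx]
    · rw [norm_mul]; gcongr; rw [le_div_iff₀ he]; exact hk x hfx
  calc ‖∫ x, f x * k x ∂μ‖ * e ≤ (∫ x, ‖f x‖ * (M / e) ∂μ) * e := by
        gcongr; exact norm_integral_le_of_norm_le (hf.norm.mul_const _) (.of_forall hpt)
    _ = (∫ x, ‖f x‖ ∂μ) * M := by rw [integral_mul_const]; field_simp

/-- For `f` continuous with compact support on ℝⁿ and `t > 0`, the complexified
Gaussian regularization `f_t(z) = (πt)^{-n/2} ∫ f(y) e^{-(z-y)·(z-y)/t} dy` is an entire
function of `z ∈ ℂⁿ`, and in every cone `|Im z| ≤ C|Re z|` with `0 < C < 1` it decays faster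
than any power of `e^{-|z|}`. -/
theorem gaussian_regularization_entire_with_decay
    {n : ℕ} (f : (Fin n → ℝ) → ℂ) (hf : Continuous f) (hsupp : HasCompactSupport f)
    (t : ℝ) (ht : 0 < t)
    (F : (Fin n → ℂ) → ℂ)
    (hF : ∀ z, F z = (((Real.pi * t) ^ (-(n : ℝ) / 2) : ℝ) : ℂ) *
      ∫ y : Fin n → ℝ, f y * Complex.exp (-(∑ j, (z j - (y j : ℂ)) ^ 2) / (t : ℂ))) :
    Differentiable ℂ F ∧
    ∀ C : ℝ, 0 < C → C < 1 → ∀ N : ℝ, 0 < N →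
      ∃ B : ℝ, ∀ z : Fin n → ℂ,
        Real.sqrt (∑ j, (z j).im ^ 2) ≤ C * Real.sqrt (∑ j, (z j).re ^ 2) →
        ‖F z‖ * Real.exp (N * Real.sqrt (∑ j, ‖z j‖ ^ 2)) ≤ B := by
  refine ⟨?_, fun C hC0 hC1 N hN => ?_⟩
  · have hG : ContDiff ℂ 1 fun w : Fin n → ℂ => Complex.exp (-(∑ j, w j ^ 2) / t) := by
      fun_prop
    rw [funext hF]
    exact (differentiable_integral_smul_comp_sub (μ := volume) hf hsupp
      (φ := fun y j => (y j : ℂ)) (by fun_prop) hG).const_mul _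
  · obtain ⟨R, hR⟩ := (hsupp.isCompact.image
      (show Continuous fun y : Fin n → ℝ => √(∑ j, y j ^ 2) by fun_prop)).bddAbove
    refine ⟨‖(((Real.pi * t) ^ (-(n : ℝ) / 2) : ℝ) : ℂ)‖ * (∫ y, ‖f y‖) *
      Real.exp ((2 * R / t + 2 * N) ^ 2 / (4 * ((1 - C ^ 2) / t))), fun z hz => ?_⟩
    rw [hF z, norm_mul, mul_assoc, mul_assoc]
    refine mul_le_mul_of_nonneg_left (norm_integral_mul_mul_le
      (hf.integrable_of_hasCompactSupport hsupp) (Real.exp_pos _) fun y hy => ?_) (norm_nonneg _)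
    exact norm_cexp_mul_exp_le_of_cone ht (by nlinarith) hN.le (sum_im_sq_le_of_sqrt_le hz)
      (hR ⟨y, subset_tsupport f hy, rfl⟩)
end

section
/- Let f : ℝⁿ → ℂ be continuous with compact support and let f_t be its convolution with the Gaussian heat kernel at time t > 0. Then e^{|x|²} (f(x) − f_t(x)) converges to 0 uniformly in x as t → 0⁺; in particular f_t → f in L²(ℝⁿ, μ) for any locally finite Borel measure μ satisfying μ({x : |x| ≤ R}) ≤ C e^{R²} for all R (e.g., any measure with density bounded by a polynomial times e^{|x|²}). -/
/-!
Writing `f x - f_t x = ∫ G_t(x - y) (f x - f y) dy` with the normalized heat kernel `G_t`, uniform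
continuity of `f` and the concentration of `G_t` at scale `√t` give `f_t → f` uniformly. This
controls the weight `e^{‖x‖²}` on the ball `‖x‖ ≤ R + 1`, where `supp f ⊆ B_R`. Outside it
`f x = 0`, and since `‖x - y‖ ≥ ‖x‖ - R ≥ 1` for `y ∈ supp f`, the Gaussian factor
`e^{-‖x - y‖²/t}` beats `e^{‖x‖²}` as soon as `t (R + 1)² ≤ 1`, leaving
`e^{‖x‖²} ‖f_t x‖ ≤ C t^{-n/2} e^{-1/t}`. The `L²(μ)` statement follows because the growth
condition on `μ` makes `e^{-2‖x‖²}` integrable.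
-/

open MeasureTheory Real Filter Topology Metric Module

section HeatKernel

variable {V : Type*} [NormedAddCommGroup V] [InnerProductSpace ℝ V]

variable (V) in
noncomputable def heatKernel (t : ℝ) (x : V) : ℝ :=
  (π * t) ^ (-(finrank ℝ V : ℝ) / 2) * rexp (-‖x‖ ^ 2 / t)

lemma heatKernel_nonneg {t : ℝ} (ht : 0 < t) (x : V) : 0 ≤ heatKernel V t x := by
  unfold heatKernel; positivity

lemma heatKernel_le_of_le_norm {t r : ℝ} (ht : 0 < t) {x : V} (hr0 : 0 ≤ r) (hr : r ≤ ‖x‖) :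
    heatKernel V t x ≤ 2 ^ (finrank ℝ V / 2 : ℝ) * rexp (-r ^ 2 / (2 * t)) *
      heatKernel V (2 * t) x := by
  have hexp : rexp (-‖x‖ ^ 2 / t) ≤ rexp (-r ^ 2 / (2 * t)) * rexp (-‖x‖ ^ 2 / (2 * t)) := by
    rw [← exp_add, exp_le_exp, ← add_div, div_le_div_iff₀ ht (by positivity)]
    nlinarith [pow_le_pow_left₀ hr0 hr 2]
  have hscale : 2 ^ (finrank ℝ V / 2 : ℝ) * (π * (2 * t)) ^ (-(finrank ℝ V : ℝ) / 2) =
      (π * t) ^ (-(finrank ℝ V : ℝ) / 2) := by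
    rw [mul_left_comm, mul_rpow (by norm_num) (by positivity), ← mul_assoc, ← rpow_add two_pos,
      neg_div, add_neg_cancel, rpow_zero, one_mul]
  unfold heatKernel
  calc _ ≤ (π * t) ^ (-(finrank ℝ V : ℝ) / 2) *
        (rexp (-r ^ 2 / (2 * t)) * rexp (-‖x‖ ^ 2 / (2 * t))) :=
        mul_le_mul_of_nonneg_left hexp (by positivity)
    _ = _ := by rw [← hscale]; ring

variable [FiniteDimensional ℝ V] [MeasurableSpace V] [BorelSpace V]

lemma integrable_exp_neg_sq_norm_div {t : ℝ} (ht : 0 < t) :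
    Integrable fun x : V => rexp (-‖x‖ ^ 2 / t) := by
  have h := (GaussianFourier.integrable_cexp_neg_mul_sq_norm_add (V := V)
    (b := (t⁻¹ : ℂ)) (by simpa using ht) 0 0).norm
  refine h.congr (Eventually.of_forall fun x => ?_)
  simp only [Complex.norm_exp, ← Complex.ofReal_pow, ← Complex.ofReal_inv, ← Complex.ofReal_neg,
    ← Complex.ofReal_mul, zero_mul, add_zero, Complex.ofReal_re]
  ring_nf

lemma integral_exp_neg_sq_norm_div {t : ℝ} (ht : 0 < t) :
    ∫ x : V, rexp (-‖x‖ ^ 2 / t) = (π * t) ^ (finrank ℝ V / 2 : ℝ) := by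
  have h (x : V) : -‖x‖ ^ 2 / t = -t⁻¹ * ‖x‖ ^ 2 := by ring
  simp_rw [h]
  rw [GaussianFourier.integral_rexp_neg_mul_sq_norm (inv_pos.2 ht), div_inv_eq_mul]

lemma integrable_heatKernel {t : ℝ} (ht : 0 < t) : Integrable (heatKernel V t) :=
  (integrable_exp_neg_sq_norm_div ht).const_mul _

lemma integral_heatKernel {t : ℝ} (ht : 0 < t) : ∫ x, heatKernel V t x = 1 := by
  simp only [heatKernel]
  rw [integral_const_mul, integral_exp_neg_sq_norm_div ht, ← rpow_add (by positivity),
    neg_div, neg_add_cancel, rpow_zero]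

end HeatKernel

lemma tendsto_exp_neg_div_nhdsGT_zero {b : ℝ} (hb : 0 < b) :
    Tendsto (fun t => rexp (-b / t)) (𝓝[>] 0) (𝓝 0) := by
  have h := tendsto_neg_atTop_atBot.comp (tendsto_inv_nhdsGT_zero.const_mul_atTop hb)
  exact tendsto_exp_atBot.comp (h.congr fun t => by simp [div_eq_mul_inv])

lemma tendsto_mul_rpow_neg_mul_exp_neg_one_div_nhdsGT_zero {c : ℝ} (hc : 0 < c) (a : ℝ) :
    Tendsto (fun t => (c * t) ^ (-a) * rexp (-1 / t)) (𝓝[>] 0) (𝓝 0) := by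
  have h := ((tendsto_rpow_mul_exp_neg_mul_atTop_nhds_zero a 1 one_pos).comp
    tendsto_inv_nhdsGT_zero).const_mul (c ^ (-a))
  rw [mul_zero] at h
  refine h.congr' (eventually_nhdsWithin_of_forall fun t (ht : 0 < t) => ?_)
  simp only [Function.comp_apply, mul_rpow hc.le ht.le, inv_rpow ht.le, ← rpow_neg ht.le]
  ring_nf

lemma sq_sub_sq_div_le {R a d t : ℝ} (hR : 0 ≤ R) (ha : R + 1 ≤ a) (hd : a - R ≤ d) (ht : 0 < t)
    (htR : t * (R + 1) ^ 2 ≤ 1) : a ^ 2 - d ^ 2 / t ≤ (R + 1) ^ 2 - 1 / t := by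
  have hs : 1 ≤ (a - R) ^ 2 := by nlinarith
  have hd2 : (a - R) ^ 2 ≤ d ^ 2 := pow_le_pow_left₀ (by linarith) hd 2
  have ha2 : a ^ 2 ≤ (a - R) ^ 2 * (R + 1) ^ 2 := by
    rw [← mul_pow]
    exact pow_le_pow_left₀ (by linarith) (by nlinarith) 2
  have hu : (R + 1) ^ 2 ≤ 1 / t := by rw [le_div_iff₀ ht]; linarith
  have : (a - R) ^ 2 / t ≤ d ^ 2 / t := div_le_div_of_nonneg_right hd2 ht.le
  rw [div_eq_mul_one_div (d ^ 2), div_eq_mul_one_div ((a - R) ^ 2)] at *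
  nlinarith

section HeatRegularization

variable {V : Type*} [NormedAddCommGroup V] [InnerProductSpace ℝ V] [FiniteDimensional ℝ V]
  [MeasurableSpace V] [BorelSpace V] {E : Type*} [NormedAddCommGroup E] [NormedSpace ℝ E]

noncomputable def heatReg (f : V → E) (t : ℝ) (x : V) : E :=
  ∫ y, heatKernel V t (x - y) • f y

lemma sub_heatReg_eq [CompleteSpace E] {f : V → E} (hf : Continuous f) {M : ℝ}
    (hM : ∀ y, ‖f y‖ ≤ M) {t : ℝ} (ht : 0 < t) (x : V) :
    f x - heatReg f t x = ∫ y, heatKernel V t (x - y) • (f x - f y) := by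
  have hK := (integrable_heatKernel (V := V) ht).comp_sub_left x
  simp_rw [smul_sub]
  have hKf : Integrable fun y => heatKernel V t (x - y) • f y :=
    hK.smul_bdd M hf.aestronglyMeasurable (ae_of_all _ hM)
  rw [integral_sub (hK.smul_const _) hKf,
    integral_smul_const, integral_sub_left_eq_self (heatKernel V t), integral_heatKernel ht,
    one_smul, heatReg]

lemma norm_sub_heatReg_le [CompleteSpace E] {f : V → E} (hf : Continuous f) {M : ℝ}
    (hM : ∀ y, ‖f y‖ ≤ M) {ε r t : ℝ} (hε : 0 ≤ ε) (hr : 0 ≤ r) (ht : 0 < t) (x : V)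
    (hfx : ∀ y, dist x y < r → ‖f x - f y‖ ≤ ε) :
    ‖f x - heatReg f t x‖ ≤
      ε + 2 * M * 2 ^ (finrank ℝ V / 2 : ℝ) * rexp (-r ^ 2 / (2 * t)) := by
  set A := 2 * M * 2 ^ (finrank ℝ V / 2 : ℝ) * rexp (-r ^ 2 / (2 * t))
  have hK := (integrable_heatKernel (V := V) ht).comp_sub_left x
  have hK2 := (integrable_heatKernel (V := V) (by positivity : 0 < 2 * t)).comp_sub_left x
  have hA : 0 ≤ A := by
    have : 0 ≤ M := (norm_nonneg _).trans (hM x)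
    positivity
  have hbound : ∀ y, ‖heatKernel V t (x - y) • (f x - f y)‖ ≤
      ε * heatKernel V t (x - y) + A * heatKernel V (2 * t) (x - y) := by
    intro y
    have hKy := heatKernel_nonneg ht (x - y)
    rw [norm_smul, norm_of_nonneg hKy]
    by_cases hxy : dist x y < r
    · have := heatKernel_nonneg (by positivity : 0 < 2 * t) (x - y)
      nlinarith [mul_le_mul_of_nonneg_left (hfx y hxy) hKy, mul_nonneg hA this]
    · have hfxy : ‖f x - f y‖ ≤ 2 * M := by linarith [norm_sub_le (f x) (f y), hM x, hM y]
      have hfar := heatKernel_le_of_le_norm ht hr (by rwa [not_lt, dist_eq_norm] at hxy)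
      nlinarith [mul_le_mul hfar hfxy (norm_nonneg _) (hKy.trans hfar)]
  rw [sub_heatReg_eq hf hM ht x]
  refine (norm_integral_le_of_norm_le (g := fun y => ε * heatKernel V t (x - y) +
    A * heatKernel V (2 * t) (x - y)) ((hK.const_mul ε).add (hK2.const_mul A))
    (ae_of_all _ hbound)).trans_eq ?_
  rw [integral_add (hK.const_mul ε) (hK2.const_mul A), integral_const_mul, integral_const_mul,
    integral_sub_left_eq_self (heatKernel V t), integral_sub_left_eq_self (heatKernel V (2 * t)),
    integral_heatKernel ht, integral_heatKernel (by positivity), mul_one, mul_one]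

theorem tendstoUniformly_heatReg [CompleteSpace E] {f : V → E} (hf : UniformContinuous f)
    {M : ℝ} (hM : ∀ y, ‖f y‖ ≤ M) : TendstoUniformly (heatReg f) f (𝓝[>] 0) := by
  rw [Metric.tendstoUniformly_iff]
  intro ε hε
  obtain ⟨r, hr, hfr⟩ := Metric.uniformContinuous_iff.1 hf (ε / 2) (half_pos hε)
  have htail : Tendsto (fun t => 2 * M * 2 ^ (finrank ℝ V / 2 : ℝ) * rexp (-r ^ 2 / (2 * t)))
      (𝓝[>] 0) (𝓝 0) := by
    have h := (tendsto_exp_neg_div_nhdsGT_zero (by positivity : 0 < r ^ 2 / 2)).const_mul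
      (2 * M * 2 ^ (finrank ℝ V / 2 : ℝ))
    rw [mul_zero] at h
    exact h.congr fun t => by ring_nf
  filter_upwards [htail.eventually (gt_mem_nhds (half_pos hε)), self_mem_nhdsWithin]
    with t htailt ht x
  rw [dist_eq_norm]
  have := norm_sub_heatReg_le hf.continuous hM (half_pos hε).le hr.le ht x
    fun y hy => (dist_eq_norm (f x) (f y) ▸ hfr hy).le
  linarith

lemma exp_sq_norm_mul_norm_heatReg_le {f : V → E} {R M t : ℝ} (hR : 0 ≤ R)
    (hsupp : tsupport f ⊆ closedBall 0 R) (hM : ∀ y, ‖f y‖ ≤ M) (ht : 0 < t)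
    (htR : t * (R + 1) ^ 2 ≤ 1) {x : V} (hx : R + 1 ≤ ‖x‖) :
    rexp (‖x‖ ^ 2) * ‖heatReg f t x‖ ≤ M * volume.real (closedBall (0 : V) R) *
      rexp ((R + 1) ^ 2) * ((π * t) ^ (-(finrank ℝ V : ℝ) / 2) * rexp (-1 / t)) := by
  set c := (π * t) ^ (-(finrank ℝ V : ℝ) / 2) * rexp ((R + 1) ^ 2 - 1 / t - ‖x‖ ^ 2) * M
  have hbound : ∀ y, ‖heatKernel V t (x - y) • f y‖ ≤
      (closedBall (0 : V) R).indicator (fun _ => c) y := by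
    intro y
    by_cases hy : y ∈ closedBall (0 : V) R
    · rw [Set.indicator_of_mem hy, norm_smul, norm_of_nonneg (heatKernel_nonneg ht _)]
      have hdist : ‖x‖ - R ≤ ‖x - y‖ := by
        have := norm_sub_norm_le x y
        linarith [mem_closedBall_zero_iff.1 hy]
      have hexp : rexp (-‖x - y‖ ^ 2 / t) ≤ rexp ((R + 1) ^ 2 - 1 / t - ‖x‖ ^ 2) := by
        rw [exp_le_exp]
        linarith [sq_sub_sq_div_le hR hx hdist ht htR, neg_div t (‖x - y‖ ^ 2)]
      exact mul_le_mul (mul_le_mul_of_nonneg_left hexp (by positivity)) (hM y) (norm_nonneg _)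
        (by positivity)
    · rw [Set.indicator_of_notMem hy, image_eq_zero_of_notMem_tsupport (fun h => hy (hsupp h)),
        smul_zero, norm_zero]
  have hint : Integrable ((closedBall (0 : V) R).indicator fun _ => c) :=
    (integrableOn_const measure_closedBall_lt_top.ne).integrable_indicator measurableSet_closedBall
  calc rexp (‖x‖ ^ 2) * ‖heatReg f t x‖
      ≤ rexp (‖x‖ ^ 2) * (volume.real (closedBall (0 : V) R) * c) := by
        gcongr
        refine (norm_integral_le_of_norm_le hint (ae_of_all _ hbound)).trans_eq ?_
        rw [integral_indicator_const _ measurableSet_closedBall, smul_eq_mul]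
    _ = _ := by
        have hexp : rexp (‖x‖ ^ 2) * rexp ((R + 1) ^ 2 - 1 / t - ‖x‖ ^ 2) =
            rexp ((R + 1) ^ 2) * rexp (-1 / t) := by
          rw [← exp_add, ← exp_add]; ring_nf
        linear_combination (volume.real (closedBall (0 : V) R) *
          (π * t) ^ (-(finrank ℝ V : ℝ) / 2) * M) * hexp

theorem tendstoUniformly_exp_sq_norm_mul_norm_sub_heatReg [CompleteSpace E] {f : V → E}
    (hf : Continuous f) (hsupp : HasCompactSupport f) :
    TendstoUniformly (fun t x => rexp (‖x‖ ^ 2) * ‖f x - heatReg f t x‖) 0 (𝓝[>] 0) := by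
  obtain ⟨R, hR, hfR⟩ := hsupp.isBounded.subset_closedBall_lt 0 (0 : V)
  obtain ⟨M, hM⟩ := hf.bounded_above_of_compact_support hsupp
  set W := M * volume.real (closedBall (0 : V) R) * rexp ((R + 1) ^ 2)
  rw [Metric.tendstoUniformly_iff]
  intro ε hε
  have hnear := Metric.tendstoUniformly_iff.1
    (tendstoUniformly_heatReg (hsupp.uniformContinuous_of_continuous hf) hM)
    (ε * rexp (-(R + 1) ^ 2)) (by positivity)
  have hfar : ∀ᶠ t in 𝓝[>] 0, W * ((π * t) ^ (-(finrank ℝ V : ℝ) / 2) * rexp (-1 / t)) < ε := by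
    have h := (tendsto_mul_rpow_neg_mul_exp_neg_one_div_nhdsGT_zero pi_pos
      (finrank ℝ V / 2 : ℝ)).const_mul W
    rw [mul_zero] at h
    simpa only [neg_div] using h.eventually (gt_mem_nhds hε)
  have hsmall : ∀ᶠ t in 𝓝[>] 0, t * (R + 1) ^ 2 ≤ 1 := by
    have h : Tendsto (fun t => t * (R + 1) ^ 2) (𝓝[>] 0) (𝓝 0) := by
      simpa using ((tendsto_id (x := 𝓝 (0 : ℝ))).mul_const ((R + 1) ^ 2)).mono_left
        nhdsWithin_le_nhds
    exact h.eventually (eventually_le_nhds one_pos)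
  filter_upwards [hnear, hfar, hsmall, self_mem_nhdsWithin] with t hnear hfar hsmall ht x
  rw [Pi.zero_apply, dist_zero_left, norm_of_nonneg (by positivity)]
  by_cases hx : ‖x‖ ≤ R + 1
  · have hw : rexp (‖x‖ ^ 2) ≤ rexp ((R + 1) ^ 2) := by
      rw [exp_le_exp]; exact pow_le_pow_left₀ (norm_nonneg x) hx 2
    calc rexp (‖x‖ ^ 2) * ‖f x - heatReg f t x‖
        ≤ rexp ((R + 1) ^ 2) * ‖f x - heatReg f t x‖ := by gcongr
      _ < rexp ((R + 1) ^ 2) * (ε * rexp (-(R + 1) ^ 2)) := by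
        gcongr; rw [← dist_eq_norm]; exact hnear x
      _ = ε := by rw [mul_left_comm, ← exp_add, add_neg_cancel, exp_zero, mul_one]
  · have hfx : f x = 0 := image_eq_zero_of_notMem_tsupport fun h => by
      linarith [mem_closedBall_zero_iff.1 (hfR h)]
    rw [hfx, zero_sub, norm_neg]
    exact (exp_sq_norm_mul_norm_heatReg_le hR.le hfR hM ht hsmall (not_le.1 hx).le).trans_lt
      (by simpa only [W, mul_assoc] using hfar)

end HeatRegularization

section GaussianWeight

variable {X : Type*} [NormedAddCommGroup X] [MeasurableSpace X]

lemma integrable_exp_neg_two_mul_sq_norm_of_measure_closedBall_le [OpensMeasurableSpace X]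
    {μ : Measure X} {C : ℝ}
    (hC : ∀ R : ℝ, μ (closedBall 0 R) ≤ ENNReal.ofReal (C * rexp (R ^ 2))) :
    Integrable (fun x : X => rexp (-2 * ‖x‖ ^ 2)) μ := by
  refine ⟨(by fun_prop : Continuous fun x : X => rexp (-2 * ‖x‖ ^ 2)).aestronglyMeasurable, ?_⟩
  rw [hasFiniteIntegral_iff_ofReal (ae_of_all _ fun x => (exp_pos _).le)]
  set B : ℕ → Set X := fun k => closedBall 0 (k + 1)
  have hpt : ∀ x : X, ENNReal.ofReal (rexp (-2 * ‖x‖ ^ 2)) ≤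
      ∑' k : ℕ, (B k).indicator (fun _ => ENNReal.ofReal (rexp (-2 * (k : ℝ) ^ 2))) x := by
    intro x
    refine le_trans ?_ (ENNReal.le_tsum ⌊‖x‖⌋₊)
    have hx : x ∈ B ⌊‖x‖⌋₊ := mem_closedBall_zero_iff.2 (Nat.lt_floor_add_one _).le
    rw [Set.indicator_of_mem hx]
    have hk := Nat.floor_le (norm_nonneg x)
    exact ENNReal.ofReal_le_ofReal
      (exp_le_exp.2 (by nlinarith [Nat.cast_nonneg (α := ℝ) ⌊‖x‖⌋₊]))
  have hterm : ∀ k : ℕ, ENNReal.ofReal (rexp (-2 * (k : ℝ) ^ 2)) * μ (B k) ≤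
      ENNReal.ofReal (max C 0 * rexp 4 * rexp (-k)) := by
    intro k
    calc ENNReal.ofReal (rexp (-2 * (k : ℝ) ^ 2)) * μ (B k)
        ≤ ENNReal.ofReal (rexp (-2 * (k : ℝ) ^ 2)) *
            ENNReal.ofReal (max C 0 * rexp (((k : ℝ) + 1) ^ 2)) := by
          gcongr
          exact (hC _).trans (ENNReal.ofReal_le_ofReal (by gcongr; exact le_max_left _ _))
      _ = ENNReal.ofReal (max C 0 * rexp (((k : ℝ) + 1) ^ 2 - 2 * (k : ℝ) ^ 2)) := by
          rw [← ENNReal.ofReal_mul (exp_pos _).le, mul_left_comm, ← exp_add]; ring_nf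
      _ ≤ ENNReal.ofReal (max C 0 * rexp 4 * rexp (-k)) := by
          rw [mul_assoc, ← exp_add]
          gcongr
          nlinarith [sq_nonneg ((k : ℝ) - 3 / 2)]
  calc ∫⁻ x, ENNReal.ofReal (rexp (-2 * ‖x‖ ^ 2)) ∂μ
      ≤ ∫⁻ x, ∑' k : ℕ,
          (B k).indicator (fun _ => ENNReal.ofReal (rexp (-2 * (k : ℝ) ^ 2))) x ∂μ :=
        lintegral_mono hpt
    _ = ∑' k : ℕ, ENNReal.ofReal (rexp (-2 * (k : ℝ) ^ 2)) * μ (B k) := by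
        rw [lintegral_tsum fun k => (aemeasurable_const.indicator measurableSet_closedBall)]
        simp_rw [lintegral_indicator_const measurableSet_closedBall]
        rfl
    _ ≤ ∑' k : ℕ, ENNReal.ofReal (max C 0 * rexp 4 * rexp (-k)) := ENNReal.tsum_le_tsum hterm
    _ = ENNReal.ofReal (∑' k : ℕ, max C 0 * rexp 4 * rexp (-k)) :=
        (ENNReal.ofReal_tsum_of_nonneg (fun k => by positivity)
          (summable_exp_neg_nat.mul_left _)).symm
    _ < ⊤ := ENNReal.ofReal_lt_top

lemma tendsto_integral_sq_norm_of_tendstoUniformly {ι F : Type*} [NormedAddCommGroup F]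
    {μ : Measure X} {l : Filter ι} {g : ι → X → F}
    (hμ : Integrable (fun x => rexp (-2 * ‖x‖ ^ 2)) μ)
    (hg : TendstoUniformly (fun i x => rexp (‖x‖ ^ 2) * ‖g i x‖) 0 l) :
    Tendsto (fun i => ∫ x, ‖g i x‖ ^ 2 ∂μ) l (𝓝 0) := by
  set K := ∫ x, rexp (-2 * ‖x‖ ^ 2) ∂μ
  have hK : 0 ≤ K := integral_nonneg fun x => (exp_pos _).le
  rw [Metric.tendsto_nhds]
  intro ε hε
  have hη : 0 < ε / (K + 1) := by positivity
  filter_upwards [Metric.tendstoUniformly_iff.1 hg _ (sqrt_pos.2 hη)] with i hi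
  have hpt : ∀ x, ‖g i x‖ ^ 2 ≤ ε / (K + 1) * rexp (-2 * ‖x‖ ^ 2) := by
    intro x
    have hx := hi x
    rw [Pi.zero_apply, dist_zero_left, norm_of_nonneg (by positivity)] at hx
    have hsq : (rexp (‖x‖ ^ 2) * ‖g i x‖) ^ 2 ≤ ε / (K + 1) := by
      rw [← sq_sqrt hη.le]; exact pow_le_pow_left₀ (by positivity) hx.le 2
    calc ‖g i x‖ ^ 2 = (rexp (‖x‖ ^ 2) * ‖g i x‖) ^ 2 * rexp (-2 * ‖x‖ ^ 2) := by
          rw [mul_pow, mul_right_comm, ← exp_nat_mul, ← exp_add]; norm_num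
      _ ≤ ε / (K + 1) * rexp (-2 * ‖x‖ ^ 2) := by gcongr
  have hle : ∫ x, ‖g i x‖ ^ 2 ∂μ ≤ ε / (K + 1) * K := by
    rw [← integral_const_mul]
    exact integral_mono_of_nonneg (ae_of_all _ fun x => by positivity) (hμ.const_mul _)
      (ae_of_all _ hpt)
  rw [dist_zero_right, norm_of_nonneg (integral_nonneg fun x => by positivity)]
  calc _ ≤ ε / (K + 1) * K := hle
    _ < ε := by rw [div_mul_eq_mul_div, div_lt_iff₀ (by positivity)]; linarith

end GaussianWeight

/-- For `f` continuous with compact support and `f_t` its Gaussian (heat kernel)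
regularization, `e^{|x|²}(f(x) − f_t(x)) → 0` uniformly in `x` as `t → 0⁺`; in particular
`f_t → f` in `L²(μ)` for any measure `μ` with `μ(B_R(0)) ≤ C e^{R²}`. -/
theorem heat_regularization_converges_uniformly_with_gaussian_weight
    {n : ℕ} (f : EuclideanSpace ℝ (Fin n) → ℂ) (hf : Continuous f)
    (hsupp : HasCompactSupport f)
    (ft : ℝ → EuclideanSpace ℝ (Fin n) → ℂ)
    (hft : ∀ t x, ft t x = ((Real.pi * t) ^ (-(n : ℝ) / 2) : ℝ) •
      ∫ y, Real.exp (-‖x - y‖ ^ 2 / t) • f y) :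
    (∀ ε : ℝ, 0 < ε → ∃ δ : ℝ, 0 < δ ∧ ∀ t ∈ Set.Ioo (0 : ℝ) δ,
      ∀ x, Real.exp (‖x‖ ^ 2) * ‖f x - ft t x‖ ≤ ε) ∧
    ∀ μ : Measure (EuclideanSpace ℝ (Fin n)),
      (∃ C : ℝ, ∀ R : ℝ, μ (Metric.closedBall 0 R) ≤ ENNReal.ofReal (C * Real.exp (R ^ 2))) →
      Filter.Tendsto (fun t => ∫ x, ‖f x - ft t x‖ ^ 2 ∂μ)
        (nhdsWithin 0 (Set.Ioi 0)) (nhds 0) := by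
  have hft_eq : ft = heatReg f := by
    ext t x : 2
    simp only [hft, heatReg, heatKernel, finrank_euclideanSpace_fin, mul_smul, integral_smul]
  subst hft_eq
  have hconv := tendstoUniformly_exp_sq_norm_mul_norm_sub_heatReg hf hsupp
  refine ⟨fun ε hε => ?_, fun μ ⟨C, hC⟩ => tendsto_integral_sq_norm_of_tendstoUniformly
    (integrable_exp_neg_two_mul_sq_norm_of_measure_closedBall_le hC) hconv⟩
  obtain ⟨δ, hδ, hsub⟩ :=
    mem_nhdsGT_iff_exists_Ioo_subset.1 (Metric.tendstoUniformly_iff.1 hconv ε hε)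
  refine ⟨δ, hδ, fun t ht x => ?_⟩
  have h := hsub ht x
  rw [Pi.zero_apply, dist_zero_left, norm_of_nonneg (by positivity)] at h
  exact h.le
end
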